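/- arXiv:2006.04443 — 2 statements merged into one kernel-verified Lean document; each statement's English description precedes it below -/
import Mathlib

section
/- (Pointwise bound for second derivatives of waves) Let u : R^{1+2} → R be C^2 and let (t,x) satisfy |x| < t. Then for all α, β ∈ {0,1,2}, |∂_α ∂_β u(t,x)| ≤ C (t-|x|)^{-1} ( Σ_{a,γ} |∂_γ L_a u(t,x)| + Σ_γ |∂_γ u(t,x)| ) + C · t/(t-|x|) · |□u(t,x)|, for an absolute constant C, where L_a = x_a ∂_t + t ∂_{x_a} and □ = -∂_t^2 + Δ. -/
/-!
Write `S` for the sum of the first derivatives of `u` and of the `L_a u`. Up to first derivatives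
of `u`, `∂_γ L_a u = t ∂_γ ∂_a u + x_a ∂_γ ∂_t u`, so `t |∂_γ ∂_a u| ≤ S + |x| |∂_γ ∂_t u|`.
Using this relation twice inside `t² □u` leaves `(t² - |x|²) ∂_t² u = -t² □u + O((t + |x|) S)`,
which bounds `(t - |x|) |∂_t² u|` by `2 S + t |□u|`. The same relation then transfers the bound to
`∂_a ∂_t u` and from there to `∂_a ∂_b u`, each time at the cost of one more `S`.
-/

open Real Finset

/-- Partial derivative in direction `i` (0 = time, 1,2 = space) on `ℝ × ℝ × ℝ`. -/
noncomputable def pd (i : Fin 3) (u : ℝ × ℝ × ℝ → ℝ) (p : ℝ × ℝ × ℝ) : ℝ :=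
  fderiv ℝ u p (if i = 0 then (1, 0, 0) else if i = 1 then (0, 1, 0) else (0, 0, 1))

/-- Lorentz boost `L_a = x_a ∂_t + t ∂_{x_a}`, `a ∈ {1,2}`. -/
noncomputable def Lb (a : Fin 2) (u : ℝ × ℝ × ℝ → ℝ) : ℝ × ℝ × ℝ → ℝ :=
  fun p => (if a = 0 then p.2.1 else p.2.2) * pd 0 u p + p.1 * pd a.succ u p

/-- Euclidean spatial radius `r = |x|`. -/
noncomputable def rad (p : ℝ × ℝ × ℝ) : ℝ := Real.sqrt (p.2.1 ^ 2 + p.2.2 ^ 2)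

/-- Wave operator `□ = -∂_t² + Δ` (signature (-,+,+)). -/
noncomputable def Box (u : ℝ × ℝ × ℝ → ℝ) (p : ℝ × ℝ × ℝ) : ℝ :=
  -pd 0 (pd 0 u) p + pd 1 (pd 1 u) p + pd 2 (pd 2 u) p

/-- The function `s/t = sqrt(t² - |x|²)/t`. -/
noncomputable def sot (p : ℝ × ℝ × ℝ) : ℝ :=
  Real.sqrt (p.1 ^ 2 - (p.2.1 ^ 2 + p.2.2 ^ 2)) / p.1

def basisVec (i : Fin 3) : ℝ × ℝ × ℝ :=
  if i = 0 then (1, 0, 0) else if i = 1 then (0, 1, 0) else (0, 0, 1)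

def spatialCoord (a : Fin 2) (p : ℝ × ℝ × ℝ) : ℝ :=
  if a = 0 then p.2.1 else p.2.2

lemma pd_eq_fderiv_basisVec (i : Fin 3) (u : ℝ × ℝ × ℝ → ℝ) (p : ℝ × ℝ × ℝ) :
    pd i u p = fderiv ℝ u p (basisVec i) := rfl

lemma pd_fun_add {f g : ℝ × ℝ × ℝ → ℝ} {p : ℝ × ℝ × ℝ} (hf : DifferentiableAt ℝ f p)
    (hg : DifferentiableAt ℝ g p) (i : Fin 3) :
    pd i (fun q => f q + g q) p = pd i f p + pd i g p := by
  simp only [pd_eq_fderiv_basisVec, fderiv_fun_add hf hg, add_apply]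

lemma pd_fun_mul {f g : ℝ × ℝ × ℝ → ℝ} {p : ℝ × ℝ × ℝ} (hf : DifferentiableAt ℝ f p)
    (hg : DifferentiableAt ℝ g p) (i : Fin 3) :
    pd i (fun q => f q * g q) p = pd i f p * g p + f p * pd i g p := by
  simp only [pd_eq_fderiv_basisVec, fderiv_fun_mul hf hg, add_apply,
    smul_apply, smul_eq_mul]
  ring

lemma pd_fst (i : Fin 3) (p : ℝ × ℝ × ℝ) : pd i Prod.fst p = if i = 0 then 1 else 0 := by
  fin_cases i <;> simp [pd_eq_fderiv_basisVec, basisVec, fderiv_fst]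

lemma pd_spatialCoord (a : Fin 2) (i : Fin 3) (p : ℝ × ℝ × ℝ) :
    pd i (spatialCoord a) p = if i = a.succ then 1 else 0 := by
  obtain rfl | rfl : a = 0 ∨ a = 1 := by omega
  · rw [pd_eq_fderiv_basisVec, show spatialCoord 0 = fun q => q.2.1 from rfl,
      hasFDerivAt_snd.fst.fderiv]
    fin_cases i <;> simp [basisVec]
  · rw [pd_eq_fderiv_basisVec, show spatialCoord 1 = fun q => q.2.2 from rfl,
      hasFDerivAt_snd.snd.fderiv]
    fin_cases i <;> simp [basisVec]

lemma differentiable_spatialCoord (a : Fin 2) : Differentiable ℝ (spatialCoord a) := by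
  obtain rfl | rfl : a = 0 ∨ a = 1 := by omega
  · exact differentiable_snd.fst
  · exact differentiable_snd.snd

section Smooth

variable {u : ℝ × ℝ × ℝ → ℝ}

lemma differentiable_pd (hu : ContDiff ℝ 2 u) (i : Fin 3) : Differentiable ℝ (pd i u) :=
  ((hu.fderiv_right (m := 1) le_rfl).differentiable one_ne_zero).clm_apply
    (differentiable_const _)

lemma pd_pd_eq (hu : ContDiff ℝ 2 u) (α β : Fin 3) (p : ℝ × ℝ × ℝ) :
    pd α (pd β u) p = fderiv ℝ (fderiv ℝ u) p (basisVec α) (basisVec β) := by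
  have hD : HasFDerivAt (pd β u)
      ((ContinuousLinearMap.apply ℝ ℝ (basisVec β)).comp (fderiv ℝ (fderiv ℝ u) p)) p :=
    (ContinuousLinearMap.apply ℝ ℝ (basisVec β)).hasFDerivAt.comp p
      ((hu.fderiv_right (m := 1) le_rfl).differentiable one_ne_zero p).hasFDerivAt
  rw [pd_eq_fderiv_basisVec, hD.fderiv]
  rfl

lemma pd_pd_comm (hu : ContDiff ℝ 2 u) (α β : Fin 3) (p : ℝ × ℝ × ℝ) :
    pd α (pd β u) p = pd β (pd α u) p := by
  rw [pd_pd_eq hu, pd_pd_eq hu]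
  exact hu.contDiffAt.isSymmSndFDerivAt (by simp) _ _

lemma pd_Lb (hu : ContDiff ℝ 2 u) (a : Fin 2) (γ : Fin 3) (p : ℝ × ℝ × ℝ) :
    pd γ (Lb a u) p = (if γ = a.succ then pd 0 u p else 0) + (if γ = 0 then pd a.succ u p else 0)
      + (p.1 * pd γ (pd a.succ u) p + spatialCoord a p * pd γ (pd 0 u) p) := by
  have hdiff := differentiable_pd hu
  change pd γ (fun q => spatialCoord a q * pd 0 u q + q.1 * pd a.succ u q) p = _
  rw [pd_fun_add (f := fun q => spatialCoord a q * pd 0 u q) (g := fun q => q.1 * pd a.succ u q)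
    ((differentiable_spatialCoord a p).mul (hdiff 0 p))
    (differentiableAt_fst.mul (hdiff a.succ p)),
    pd_fun_mul ((differentiable_spatialCoord a) p) (hdiff 0 p),
    pd_fun_mul differentiableAt_fst (hdiff a.succ p), pd_spatialCoord, pd_fst]
  split_ifs <;> ring

lemma abs_principal_pd_Lb_le (hu : ContDiff ℝ 2 u) (p : ℝ × ℝ × ℝ) (a : Fin 2) (γ : Fin 3) :
    |p.1 * pd γ (pd a.succ u) p + spatialCoord a p * pd γ (pd 0 u) p|
      ≤ (∑ a : Fin 2, ∑ γ : Fin 3, |pd γ (Lb a u) p|) + ∑ γ : Fin 3, |pd γ u p| := by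
  set lowerOrder := (if γ = a.succ then pd 0 u p else 0) + (if γ = 0 then pd a.succ u p else 0)
  have hLb : |pd γ (Lb a u) p| ≤ ∑ a : Fin 2, ∑ γ : Fin 3, |pd γ (Lb a u) p| :=
    (single_le_sum (f := fun γ => |pd γ (Lb a u) p|) (fun _ _ => abs_nonneg _) (mem_univ γ)).trans
      (single_le_sum (f := fun a => ∑ γ : Fin 3, |pd γ (Lb a u) p|)
        (fun _ _ => sum_nonneg fun _ _ => abs_nonneg _) (mem_univ a))
  have hlowerOrder : |lowerOrder| ≤ ∑ γ : Fin 3, |pd γ u p| :=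
    calc |lowerOrder| ≤ |pd 0 u p| + |pd a.succ u p| := by
          refine (abs_add_le _ _).trans (add_le_add ?_ ?_) <;> split_ifs <;> simp
      _ ≤ ∑ γ : Fin 3, |pd γ u p| :=
          add_le_sum (f := fun γ => |pd γ u p|) (fun _ _ => abs_nonneg _) (mem_univ _)
            (mem_univ _) (Fin.succ_ne_zero a).symm
  have hsplit : pd γ (Lb a u) p
      = lowerOrder + (p.1 * pd γ (pd a.succ u) p + spatialCoord a p * pd γ (pd 0 u) p) :=
    pd_Lb hu a γ p
  calc _ = |pd γ (Lb a u) p - lowerOrder| := by rw [hsplit, add_sub_cancel_left]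
    _ ≤ |pd γ (Lb a u) p| + |lowerOrder| := abs_sub _ _
    _ ≤ _ := add_le_add hLb hlowerOrder

end Smooth

lemma sq_add_sq_spatialCoord (p : ℝ × ℝ × ℝ) :
    spatialCoord 0 p ^ 2 + spatialCoord 1 p ^ 2 = rad p ^ 2 := by
  rw [rad, sq_sqrt (by positivity)]
  rfl

lemma abs_spatialCoord_le_rad (p : ℝ × ℝ × ℝ) (a : Fin 2) : |spatialCoord a p| ≤ rad p := by
  refine Real.abs_le_sqrt ?_
  obtain rfl | rfl : a = 0 ∨ a = 1 := by omega
  · exact le_add_of_nonneg_right (sq_nonneg _)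
  · exact le_add_of_nonneg_left (sq_nonneg _)

lemma sub_mul_abs_le_of_abs_mul_add_le {t r ξ y z S K : ℝ} (hrt : r < t) (hξ : |ξ| ≤ r)
    (hyz : |t * y + ξ * z| ≤ S) (hz : (t - r) * |z| ≤ K) :
    (t - r) * |y| ≤ S + K := by
  have hr : 0 ≤ r := (abs_nonneg ξ).trans hξ
  have ht : 0 < t := hr.trans_lt hrt
  have hty : t * |y| ≤ S + r * |z| := by
    calc t * |y| = |t * y + ξ * z - ξ * z| := by rw [add_sub_cancel_right, abs_mul, abs_of_pos ht]
      _ ≤ |t * y + ξ * z| + |ξ| * |z| := by rw [← abs_mul]; exact abs_sub _ _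
      _ ≤ S + r * |z| := by gcongr
  have hS : 0 ≤ S := (abs_nonneg _).trans hyz
  refine le_of_mul_le_mul_left ?_ ht
  calc t * ((t - r) * |y|) = (t - r) * (t * |y|) := by ring
    _ ≤ (t - r) * (S + r * |z|) := by gcongr
    _ = (t - r) * S + r * ((t - r) * |z|) := by ring
    _ ≤ t * S + t * K := by gcongr; linarith
    _ = t * (S + K) := by ring

section HessianBound

variable {t r S : ℝ} {x : Fin 2 → ℝ} {w : Fin 3 → Fin 3 → ℝ}

lemma sq_sub_sq_mul_zero_zero_eq (hr2 : x 0 ^ 2 + x 1 ^ 2 = r ^ 2) (hsym : ∀ α β, w α β = w β α) :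
    (t ^ 2 - r ^ 2) * w 0 0 = -t ^ 2 * (-w 0 0 + w 1 1 + w 2 2)
      + ∑ a : Fin 2, (t * (t * w a.succ a.succ + x a * w a.succ 0)
        - x a * (t * w 0 a.succ + x a * w 0 0)) := by
  simp only [Fin.sum_univ_two, Fin.succ_zero_eq_one, Fin.succ_one_eq_two]
  linear_combination w 0 0 * hr2 - t * x 0 * hsym 1 0 - t * x 1 * hsym 2 0

lemma sub_mul_abs_zero_zero_le (hr2 : x 0 ^ 2 + x 1 ^ 2 = r ^ 2) (hsym : ∀ α β, w α β = w β α)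
    (hrt : r < t) (hx : ∀ a, |x a| ≤ r) (hE : ∀ a γ, |t * w γ a.succ + x a * w γ 0| ≤ S) :
    (t - r) * |w 0 0| ≤ 2 * S + t * |-w 0 0 + w 1 1 + w 2 2| := by
  have hr : 0 ≤ r := (abs_nonneg _).trans (hx 0)
  have htr : 0 < t + r := by linarith
  have hterm : ∀ a : Fin 2, |t * (t * w a.succ a.succ + x a * w a.succ 0)
      - x a * (t * w 0 a.succ + x a * w 0 0)| ≤ (t + r) * S := fun a => by
    calc _ ≤ |t| * |t * w a.succ a.succ + x a * w a.succ 0|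
          + |x a| * |t * w 0 a.succ + x a * w 0 0| := by
          rw [← abs_mul, ← abs_mul]; exact abs_sub _ _
      _ ≤ t * S + r * S := by
          rw [abs_of_pos (by linarith)]
          exact add_le_add (mul_le_mul_of_nonneg_left (hE a a.succ) (by linarith))
            (mul_le_mul (hx a) (hE a 0) (abs_nonneg _) hr)
      _ = (t + r) * S := by ring
  refine le_of_mul_le_mul_left ?_ htr
  calc (t + r) * ((t - r) * |w 0 0|) = |(t ^ 2 - r ^ 2) * w 0 0| := by
        rw [abs_mul, abs_of_pos (a := t ^ 2 - r ^ 2) (by nlinarith)]; ring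
    _ ≤ t ^ 2 * |-w 0 0 + w 1 1 + w 2 2| + ((t + r) * S + (t + r) * S) := by
        rw [sq_sub_sq_mul_zero_zero_eq hr2 hsym, Fin.sum_univ_two]
        refine (abs_add_le _ _).trans (add_le_add ?_ ((abs_add_le _ _).trans
          (add_le_add (hterm 0) (hterm 1))))
        rw [abs_mul, abs_neg, abs_of_nonneg (sq_nonneg t)]
    _ ≤ (t + r) * (2 * S + t * |-w 0 0 + w 1 1 + w 2 2|) := by
        nlinarith [mul_nonneg (mul_nonneg hr htr.le) (abs_nonneg (-w 0 0 + w 1 1 + w 2 2))]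

lemma sub_mul_abs_zero_le (hr2 : x 0 ^ 2 + x 1 ^ 2 = r ^ 2) (hsym : ∀ α β, w α β = w β α)
    (hrt : r < t) (hx : ∀ a, |x a| ≤ r) (hE : ∀ a γ, |t * w γ a.succ + x a * w γ 0| ≤ S)
    (α : Fin 3) : (t - r) * |w α 0| ≤ 3 * S + t * |-w 0 0 + w 1 1 + w 2 2| := by
  have h00 := sub_mul_abs_zero_zero_le hr2 hsym hrt hx hE
  have hS : 0 ≤ S := (abs_nonneg _).trans (hE 0 0)
  refine Fin.cases ?_ (fun a => ?_) α
  · linarith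
  · rw [hsym]
    linarith [sub_mul_abs_le_of_abs_mul_add_le hrt (hx a) (hE a 0) h00]

lemma sub_mul_abs_le (hr2 : x 0 ^ 2 + x 1 ^ 2 = r ^ 2) (hsym : ∀ α β, w α β = w β α)
    (hrt : r < t) (hx : ∀ a, |x a| ≤ r) (hE : ∀ a γ, |t * w γ a.succ + x a * w γ 0| ≤ S)
    (α β : Fin 3) : (t - r) * |w α β| ≤ 4 * S + t * |-w 0 0 + w 1 1 + w 2 2| := by
  have hα0 := sub_mul_abs_zero_le hr2 hsym hrt hx hE α
  have hS : 0 ≤ S := (abs_nonneg _).trans (hE 0 0)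
  refine Fin.cases ?_ (fun a => ?_) β
  · linarith
  · linarith [sub_mul_abs_le_of_abs_mul_add_le hrt (hx a) (hE a α) hα0]

end HessianBound

/-- Pointwise bound for second derivatives of waves: inside the cone `|x| < t`,
`|∂∂u| ≲ (t-|x|)⁻¹ (|∂Lu| + |∂u|) + t/(t-|x|) |□u|`. -/
theorem second_derivative_bound :
    ∃ C > (0 : ℝ), ∀ u : ℝ × ℝ × ℝ → ℝ, ContDiff ℝ 2 u →
      ∀ p : ℝ × ℝ × ℝ, rad p < p.1 → ∀ α β : Fin 3,
        |pd α (pd β u) p|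
          ≤ C * (p.1 - rad p)⁻¹ *
              ((∑ a : Fin 2, ∑ γ : Fin 3, |pd γ (Lb a u) p|) + ∑ γ : Fin 3, |pd γ u p|)
            + C * (p.1 / (p.1 - rad p)) * |Box u p| := by
  refine ⟨4, by norm_num, fun u hu p hp α β => ?_⟩
  set S := (∑ a : Fin 2, ∑ γ : Fin 3, |pd γ (Lb a u) p|) + ∑ γ : Fin 3, |pd γ u p|
  have key : (p.1 - rad p) * |pd α (pd β u) p| ≤ 4 * S + p.1 * |Box u p| :=
    sub_mul_abs_le (x := fun a => spatialCoord a p) (w := fun α β => pd α (pd β u) p)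
      (sq_add_sq_spatialCoord p) (pd_pd_comm hu · · p) hp (abs_spatialCoord_le_rad p)
      (abs_principal_pd_Lb_le hu p) α β
  have hd : 0 < p.1 - rad p := sub_pos.mpr hp
  have hBox : 0 ≤ p.1 * |Box u p| := mul_nonneg ((sqrt_nonneg _).trans hp.le) (abs_nonneg _)
  calc |pd α (pd β u) p| = (p.1 - rad p)⁻¹ * ((p.1 - rad p) * |pd α (pd β u) p|) := by
        field_simp
    _ ≤ (p.1 - rad p)⁻¹ * (4 * S + 4 * (p.1 * |Box u p|)) := by gcongr; linarith
    _ = _ := by ring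
end

section
/- (Smallness of quasilinear perturbation preserves coercivity) Suppose for each α, β ∈ {0,1,2}, |Q^{αβ}| ≤ (1/100)·(s/t)^2 at a point (t,x) with t^2 = |x|^2 + s^2, t > |x|. Then for all reals (p, q_1, q_2) and (P, R_1, R_2) (representing (∂_t v, ∂_1 v, ∂_2 v) and (∂_t w, ∂_1 w, ∂_2 w)), the perturbed energy density D = [p^2 + Σ q_a^2 + 2 Σ (x_a/t) p q_a + v^2] + [P^2 + Σ R_a^2 + 2 Σ (x_a/t) P R_a] + Q^{0β} D_β v · P + Q^{0β} D_β w · p - Q^{αβ} D_α v D_β w - (x_a/t)(Q^{aβ} D_β v · P + Q^{aβ} D_β w · p) satisfies (1/2) D_0 ≤ D ≤ 2 D_0, where D_0 is the unperturbed density (the sum of the two bracketed terms) and D_α v denotes p for α = 0 and q_α otherwise (similarly for w). -/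
private lemma tb_aux (Q X Y σ x y : ℝ) (hσ : 0 ≤ σ) (hQ : |Q| ≤ 1 / 100 * σ ^ 2)
    (hx : σ * |X| ≤ x) (hy : σ * |Y| ≤ y) : |Q * X * Y| ≤ 1 / 100 * (x * y) := by
  have hx0 : 0 ≤ σ * |X| := mul_nonneg hσ (abs_nonneg X)
  have hy0 : 0 ≤ σ * |Y| := mul_nonneg hσ (abs_nonneg Y)
  calc |Q * X * Y| = |Q| * (|X| * |Y|) := by rw [abs_mul, abs_mul, mul_assoc]
    _ ≤ (1 / 100 * σ ^ 2) * (|X| * |Y|) :=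
        mul_le_mul_of_nonneg_right hQ (by positivity)
    _ = 1 / 100 * ((σ * |X|) * (σ * |Y|)) := by ring
    _ ≤ 1 / 100 * (x * y) := by
        have h := mul_le_mul hx hy hy0 (le_trans hx0 hx)
        linarith

private lemma abs3_aux (T0 T1 T2 e0 e1 e2 : ℝ) (h0 : |T0| ≤ e0) (h1 : |T1| ≤ e1)
    (h2 : |T2| ≤ e2) : |T0 + T1 + T2| ≤ e0 + e1 + e2 := by
  have := abs_add_three T0 T1 T2
  linarith

private lemma abs2_aux (T0 T1 e0 e1 : ℝ) (h0 : |T0| ≤ e0) (h1 : |T1| ≤ e1) :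
    |T0 + T1| ≤ e0 + e1 := by
  have := abs_add_le T0 T1
  linarith

private lemma absmul_aux (a w e : ℝ) (ha : |a| ≤ 1) (hw : |w| ≤ e) : |a * w| ≤ e := by
  rw [abs_mul]
  nlinarith [abs_nonneg w, abs_nonneg a]

private lemma sle_aux (σ a1 a2 : ℝ) (h : a1 ^ 2 + a2 ^ 2 + σ ^ 2 = 1) (hσ0 : 0 ≤ σ) :
    σ ≤ 1 := by nlinarith [sq_nonneg a1, sq_nonneg a2]

private lemma ale_aux (a b σ : ℝ) (h : a ^ 2 + b ^ 2 + σ ^ 2 = 1) : |a| ≤ 1 := by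
  rw [abs_le]; constructor <;> nlinarith [sq_nonneg σ, sq_nonneg b, sq_nonneg (a + 1), sq_nonneg (a - 1)]

private lemma deriv_aux (σ a p q : ℝ) (hσ0 : 0 ≤ σ) (hσle : σ ≤ 1) (ha : |a| ≤ 1) :
    σ * |q| ≤ σ * |p| + |a * p + q| := by
  have h1 : |q| ≤ |a * p + q| + |a| * |p| := by
    have h := abs_sub (a * p + q) (a * p)
    rw [add_sub_cancel_left] at h
    simpa [abs_mul] using h
  nlinarith [abs_nonneg p, abs_nonneg (a * p + q), mul_nonneg hσ0 (abs_nonneg p),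
    mul_nonneg hσ0 (abs_nonneg (a * p + q)), abs_nonneg a]

private lemma key_aux (A B1 B2 A' C1 C2 : ℝ) (hA : 0 ≤ A) (hA' : 0 ≤ A')
    (hB1 : 0 ≤ B1) (hB2 : 0 ≤ B2) (hC1 : 0 ≤ C1) (hC2 : 0 ≤ C2) :
    3 * (1 / 100 * (A * A') + 1 / 100 * ((A + B1) * A') + 1 / 100 * ((A + B2) * A'))
    + 3 * (1 / 100 * (A' * A) + 1 / 100 * ((A' + C1) * A) + 1 / 100 * ((A' + C2) * A))
    + (1 / 100 * (A * A') + 1 / 100 * (A * (A' + C1)) + 1 / 100 * (A * (A' + C2))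
      + (1 / 100 * ((A + B1) * A') + 1 / 100 * ((A + B1) * (A' + C1))
        + 1 / 100 * ((A + B1) * (A' + C2)))
      + (1 / 100 * ((A + B2) * A') + 1 / 100 * ((A + B2) * (A' + C1))
        + 1 / 100 * ((A + B2) * (A' + C2))))
    ≤ 1 / 2 * (A ^ 2 + B1 ^ 2 + B2 ^ 2 + A' ^ 2 + C1 ^ 2 + C2 ^ 2) := by
  nlinarith [sq_nonneg (A - A'), sq_nonneg (A' - B1), sq_nonneg (A' - B2),
    sq_nonneg (A - C1), sq_nonneg (A - C2), sq_nonneg (B1 - C1), sq_nonneg (B1 - C2),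
    sq_nonneg (B2 - C1), sq_nonneg (B2 - C2), sq_nonneg A, sq_nonneg A',
    sq_nonneg B1, sq_nonneg B2, sq_nonneg C1, sq_nonneg C2]

/-- Smallness of the quasilinear perturbation `|Q^{αβ}| ≤ (1/100)(s/t)²` preserves
coercivity: the perturbed energy density is comparable to the unperturbed one. -/
theorem quasilinear_coercivity (t x1 x2 s v p q1 q2 P R1 R2 : ℝ)
    (Q : Fin 3 → Fin 3 → ℝ) (Dv Dw : Fin 3 → ℝ) (D0 D : ℝ)
    (ht : Real.sqrt (x1 ^ 2 + x2 ^ 2) < t)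
    (hs : t ^ 2 = x1 ^ 2 + x2 ^ 2 + s ^ 2) (hspos : 0 < s)
    (hQ : ∀ α β, |Q α β| ≤ (1 / 100) * (s / t) ^ 2)
    (hDv : Dv = ![p, q1, q2]) (hDw : Dw = ![P, R1, R2])
    (hD0 : D0 = (p ^ 2 + q1 ^ 2 + q2 ^ 2 + 2 * (x1 / t) * p * q1 + 2 * (x2 / t) * p * q2
        + v ^ 2)
      + (P ^ 2 + R1 ^ 2 + R2 ^ 2 + 2 * (x1 / t) * P * R1 + 2 * (x2 / t) * P * R2))
    (hD : D = D0 + (∑ β : Fin 3, Q 0 β * Dv β * P) + (∑ β : Fin 3, Q 0 β * Dw β * p)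
      - (∑ α : Fin 3, ∑ β : Fin 3, Q α β * Dv α * Dw β)
      - (x1 / t) * ((∑ β : Fin 3, Q 1 β * Dv β * P) + (∑ β : Fin 3, Q 1 β * Dw β * p))
      - (x2 / t) * ((∑ β : Fin 3, Q 2 β * Dv β * P) + (∑ β : Fin 3, Q 2 β * Dw β * p))) :
    (1 / 2) * D0 ≤ D ∧ D ≤ 2 * D0 := by
  simp only [hDv, hDw, Fin.sum_univ_three, Matrix.cons_val_zero, Matrix.cons_val_one,
    Matrix.head_cons, Matrix.cons_val_two, Matrix.tail_cons] at hD
  have ht0 : 0 < t := lt_of_le_of_lt (Real.sqrt_nonneg _) ht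
  have htne : t ≠ 0 := ne_of_gt ht0
  set σ := s / t with hσdef
  set a1 := x1 / t with ha1def
  set a2 := x2 / t with ha2def
  clear_value σ a1 a2
  have hunit : a1 ^ 2 + a2 ^ 2 + σ ^ 2 = 1 := by
    rw [hσdef, ha1def, ha2def]; field_simp; linarith
  have hσ0 : (0:ℝ) ≤ σ := by rw [hσdef]; positivity
  have hσle : σ ≤ 1 := sle_aux σ a1 a2 hunit hσ0
  have ha1le : |a1| ≤ 1 := ale_aux a1 a2 σ (by linarith only [hunit])
  have ha2le : |a2| ≤ 1 := ale_aux a2 a1 σ (by linarith only [hunit])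
  set A := σ * |p| with hA
  set A' := σ * |P| with hA'
  set B1 := |a1 * p + q1| with hB1
  set B2 := |a2 * p + q2| with hB2
  set C1 := |a1 * P + R1| with hC1
  set C2 := |a2 * P + R2| with hC2
  clear_value A A' B1 B2 C1 C2
  have hA0 : 0 ≤ A := by rw [hA]; exact mul_nonneg hσ0 (abs_nonneg _)
  have hA'0 : 0 ≤ A' := by rw [hA']; exact mul_nonneg hσ0 (abs_nonneg _)
  have hB10 : 0 ≤ B1 := by rw [hB1]; exact abs_nonneg _
  have hB20 : 0 ≤ B2 := by rw [hB2]; exact abs_nonneg _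
  have hC10 : 0 ≤ C1 := by rw [hC1]; exact abs_nonneg _
  have hC20 : 0 ≤ C2 := by rw [hC2]; exact abs_nonneg _
  -- unperturbed density dominates the sum of squares
  have hident : D0 = σ ^ 2 * p ^ 2 + (a1 * p + q1) ^ 2 + (a2 * p + q2) ^ 2 + v ^ 2
      + σ ^ 2 * P ^ 2 + (a1 * P + R1) ^ 2 + (a2 * P + R2) ^ 2 := by
    rw [hD0]; linear_combination (-(p ^ 2 + P ^ 2)) * hunit
  have hD0ge : A ^ 2 + B1 ^ 2 + B2 ^ 2 + A' ^ 2 + C1 ^ 2 + C2 ^ 2 ≤ D0 := by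
    have e1 : A ^ 2 = σ ^ 2 * p ^ 2 := by rw [hA, mul_pow, sq_abs]
    have e2 : A' ^ 2 = σ ^ 2 * P ^ 2 := by rw [hA', mul_pow, sq_abs]
    rw [hident, e1, e2, hB1, hB2, hC1, hC2, sq_abs, sq_abs, sq_abs, sq_abs]
    linarith [sq_nonneg v]
  -- bounds `σ * |∂v| ≤ ...`
  have hbp : σ * |p| ≤ A := hA.ge
  have hbP : σ * |P| ≤ A' := hA'.ge
  have hbq1 : σ * |q1| ≤ A + B1 := by
    rw [hA, hB1]; exact deriv_aux σ a1 p q1 hσ0 hσle ha1le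
  have hbq2 : σ * |q2| ≤ A + B2 := by
    rw [hA, hB2]; exact deriv_aux σ a2 p q2 hσ0 hσle ha2le
  have hbR1 : σ * |R1| ≤ A' + C1 := by
    rw [hA', hC1]; exact deriv_aux σ a1 P R1 hσ0 hσle ha1le
  have hbR2 : σ * |R2| ≤ A' + C2 := by
    rw [hA', hC2]; exact deriv_aux σ a2 P R2 hσ0 hσle ha2le
  have tb := fun (α β : Fin 3) (X Y x y : ℝ) (hx : σ * |X| ≤ x) (hy : σ * |Y| ≤ y) =>
    tb_aux (Q α β) X Y σ x y hσ0 (hQ α β) hx hy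
  -- group bounds
  have hS1 := abs3_aux _ _ _ _ _ _ (tb 0 0 p P A A' hbp hbP)
    (tb 0 1 q1 P (A + B1) A' hbq1 hbP) (tb 0 2 q2 P (A + B2) A' hbq2 hbP)
  have hS2 := abs3_aux _ _ _ _ _ _ (tb 0 0 P p A' A hbP hbp)
    (tb 0 1 R1 p (A' + C1) A hbR1 hbp) (tb 0 2 R2 p (A' + C2) A hbR2 hbp)
  have hS3 := abs3_aux _ _ _ _ _ _
    (abs3_aux _ _ _ _ _ _ (tb 0 0 p P A A' hbp hbP)
      (tb 0 1 p R1 A (A' + C1) hbp hbR1) (tb 0 2 p R2 A (A' + C2) hbp hbR2))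
    (abs3_aux _ _ _ _ _ _ (tb 1 0 q1 P (A + B1) A' hbq1 hbP)
      (tb 1 1 q1 R1 (A + B1) (A' + C1) hbq1 hbR1)
      (tb 1 2 q1 R2 (A + B1) (A' + C2) hbq1 hbR2))
    (abs3_aux _ _ _ _ _ _ (tb 2 0 q2 P (A + B2) A' hbq2 hbP)
      (tb 2 1 q2 R1 (A + B2) (A' + C1) hbq2 hbR1)
      (tb 2 2 q2 R2 (A + B2) (A' + C2) hbq2 hbR2))
  have hT : ∀ α : Fin 3, |Q α 0 * p * P + Q α 1 * q1 * P + Q α 2 * q2 * P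
      + (Q α 0 * P * p + Q α 1 * R1 * p + Q α 2 * R2 * p)|
      ≤ (1 / 100 * (A * A') + 1 / 100 * ((A + B1) * A') + 1 / 100 * ((A + B2) * A'))
      + (1 / 100 * (A' * A) + 1 / 100 * ((A' + C1) * A) + 1 / 100 * ((A' + C2) * A)) :=
    fun α => abs2_aux _ _ _ _
      (abs3_aux _ _ _ _ _ _ (tb α 0 p P A A' hbp hbP)
        (tb α 1 q1 P (A + B1) A' hbq1 hbP) (tb α 2 q2 P (A + B2) A' hbq2 hbP))
      (abs3_aux _ _ _ _ _ _ (tb α 0 P p A' A hbP hbp)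
        (tb α 1 R1 p (A' + C1) A hbR1 hbp) (tb α 2 R2 p (A' + C2) A hbR2 hbp))
  have hT1 := absmul_aux a1 _ _ ha1le (hT 1)
  have hT2 := absmul_aux a2 _ _ ha2le (hT 2)
  have key := key_aux A B1 B2 A' C1 C2 hA0 hA'0 hB10 hB20 hC10 hC20
  have hsq0 : 0 ≤ A ^ 2 + B1 ^ 2 + B2 ^ 2 + A' ^ 2 + C1 ^ 2 + C2 ^ 2 := by positivity
  obtain ⟨l1, r1⟩ := abs_le.mp hS1
  obtain ⟨l2, r2⟩ := abs_le.mp hS2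
  obtain ⟨l3, r3⟩ := abs_le.mp hS3
  obtain ⟨l4, r4⟩ := abs_le.mp hT1
  obtain ⟨l5, r5⟩ := abs_le.mp hT2
  constructor <;>
    · rw [hD]
      linarith only [l1, r1, l2, r2, l3, r3, l4, r4, l5, r5, hD0ge, key, hsq0]
end
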